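/- arXiv:math/0601614 — 4 statements merged into one kernel-verified Lean document; each statement's English description precedes it below -/
import Mathlib

section
/- Let ε ≠ 0 and β be complex numbers. If y(t) satisfies P1_2(ε⁶, β): y'' = ε⁶(2y³ + ty) + β(6y² + t), then the function Y(T) := ε·y(ε⁻²T + 6β²ε⁻¹²) + βε⁻⁵, i.e. the function defined by the change of variables y = Y/ε - β/ε⁶, t = T/ε² + 6β²/ε¹², satisfies the second Painlevé equation P2(4β³/ε¹⁵): Y''(T) = 2Y(T)³ + T·Y(T) + 4β³ε⁻¹⁵. -/
/-- If `y` solves P1_2(ε⁶, β) then `Y T = ε y (ε⁻² T + 6 β² ε⁻¹²) + β ε⁻⁵`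
solves the second Painlevé equation P2(4β³ε⁻¹⁵). -/
theorem P1_2_equiv_P2 (ε β : ℂ) (hε : ε ≠ 0) (y : ℂ → ℂ)
    (hy : ContDiff ℂ 2 y)
    (heq : ∀ t : ℂ, deriv (deriv y) t
      = ε ^ 6 * (2 * y t ^ 3 + t * y t) + β * (6 * y t ^ 2 + t)) :
    ∀ T : ℂ,
      deriv (deriv (fun S : ℂ => ε * y (ε⁻¹ ^ 2 * S + 6 * β ^ 2 * ε⁻¹ ^ 12) + β * ε⁻¹ ^ 5)) T
        = 2 * (ε * y (ε⁻¹ ^ 2 * T + 6 * β ^ 2 * ε⁻¹ ^ 12) + β * ε⁻¹ ^ 5) ^ 3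
          + T * (ε * y (ε⁻¹ ^ 2 * T + 6 * β ^ 2 * ε⁻¹ ^ 12) + β * ε⁻¹ ^ 5)
          + 4 * β ^ 3 * ε⁻¹ ^ 15 := by
  have hy1 : Differentiable ℂ y := hy.differentiable (by norm_num)
  have hy2 : Differentiable ℂ (deriv y) := by
    have h : ContDiff ℂ ((1 : ℕ∞) + 1) y := by exact_mod_cast hy
    exact (contDiff_succ_iff_deriv.mp h).2.2.differentiable (by norm_num)
  intro T
  set c : ℂ := 6 * β ^ 2 * ε⁻¹ ^ 12 with hc
  have hg : ∀ S : ℂ, HasDerivAt (fun S : ℂ => ε⁻¹ ^ 2 * S + c) (ε⁻¹ ^ 2) S := by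
    intro S
    simpa only [mul_one, id_eq] using ((hasDerivAt_id S).const_mul (ε⁻¹ ^ 2)).add_const c
  have hd1 : deriv (fun S : ℂ => ε * y (ε⁻¹ ^ 2 * S + c) + β * ε⁻¹ ^ 5)
      = fun S => ε * (deriv y (ε⁻¹ ^ 2 * S + c) * ε⁻¹ ^ 2) := by
    funext S
    exact ((((hy1 _).hasDerivAt.comp S (hg S)).const_mul ε).add_const _).deriv
  rw [hd1]
  have hd2 : HasDerivAt (fun S => ε * (deriv y (ε⁻¹ ^ 2 * S + c) * ε⁻¹ ^ 2))
      (ε * (deriv (deriv y) (ε⁻¹ ^ 2 * T + c) * ε⁻¹ ^ 2 * ε⁻¹ ^ 2)) T :=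
    (((hy2 _).hasDerivAt.comp T (hg T)).mul_const _).const_mul ε
  rw [hd2.deriv, heq]
  generalize y (ε⁻¹ ^ 2 * T + c) = u
  rw [hc]
  field_simp
  have h18 : ε ^ 18 * ε⁻¹ ^ 18 = 1 := by
    rw [← mul_pow, mul_inv_cancel₀ hε, one_pow]
  ring
end

section
/- If y satisfies the second Painlevé equation P2(α): y'' = 2y³ + ty + α, then the function p := y² + y' + t/2 satisfies P34((α + 1/2)²): p'' = (p')²/(2p) + 2p² − tp − (α + 1/2)²/(2p), wherever p ≠ 0. -/
/-!
Differentiating `p = y² + y' + t/2` twice and eliminating `y''` with P2 gives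
`p' = 2yy' + 2y³ + ty + α + 1/2` and `p''` as a polynomial in `t, y, y'`; P34 is then the
polynomial identity `2p p'' - p'² = 4p³ - 2tp² - (α + 1/2)²`, divided by `2p`.
-/

section Calculus

variable {𝕜 : Type*} [NontriviallyNormedField 𝕜] {y : 𝕜 → 𝕜}

theorem hasDerivAt_sq_add_deriv_add_half {t : 𝕜} (hy : DifferentiableAt 𝕜 y t)
    (hy' : DifferentiableAt 𝕜 (deriv y) t) :
    HasDerivAt (fun s => y s ^ 2 + deriv y s + s / 2)
      (2 * y t * deriv y t + deriv (deriv y) t + 1 / 2) t := by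
  refine (((hy.hasDerivAt.fun_pow 2).fun_add hy'.hasDerivAt).fun_add
    ((hasDerivAt_id' t).div_const 2)).congr_deriv ?_
  ring

theorem deriv_sq_add_deriv_add_half_of_P2 {α : 𝕜} (hy : Differentiable 𝕜 y)
    (hy' : Differentiable 𝕜 (deriv y))
    (hP2 : ∀ t, deriv (deriv y) t = 2 * y t ^ 3 + t * y t + α) :
    deriv (fun s => y s ^ 2 + deriv y s + s / 2)
      = fun s => 2 * y s * deriv y s + (2 * y s ^ 3 + s * y s + α) + 1 / 2 := by
  funext s
  rw [(hasDerivAt_sq_add_deriv_add_half (hy s) (hy' s)).deriv, hP2 s]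

theorem deriv_deriv_sq_add_deriv_add_half_of_P2 {α : 𝕜} (hy : Differentiable 𝕜 y)
    (hy' : Differentiable 𝕜 (deriv y))
    (hP2 : ∀ t, deriv (deriv y) t = 2 * y t ^ 3 + t * y t + α) (t : 𝕜) :
    deriv (deriv (fun s => y s ^ 2 + deriv y s + s / 2)) t
      = 2 * (deriv y t ^ 2 + y t * (2 * y t ^ 3 + t * y t + α))
        + 6 * y t ^ 2 * deriv y t + y t + t * deriv y t := by
  rw [deriv_sq_add_deriv_add_half_of_P2 hy hy' hP2]
  have hy₁ := (hy t).hasDerivAt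
  have hy₂ := (hy' t).hasDerivAt
  rw [hP2 t] at hy₂
  refine HasDerivAt.deriv <| HasDerivAt.congr_deriv (((hy₁.const_mul 2).fun_mul hy₂).fun_add
    ((((hy₁.fun_pow 3).const_mul 2).fun_add ((hasDerivAt_id' t).fun_mul hy₁)).add_const α)
    |>.add_const (1 / 2)) ?_
  push_cast
  ring

end Calculus

theorem P34_algebraic_identity {K : Type*} [Field K] [CharZero K] (α t a b : K)
    (hp : a ^ 2 + b + t / 2 ≠ 0) :
    2 * (b ^ 2 + a * (2 * a ^ 3 + t * a + α)) + 6 * a ^ 2 * b + a + t * b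
      = (2 * a * b + (2 * a ^ 3 + t * a + α) + 1 / 2) ^ 2 / (2 * (a ^ 2 + b + t / 2))
        + 2 * (a ^ 2 + b + t / 2) ^ 2 - t * (a ^ 2 + b + t / 2)
        - (α + 1 / 2) ^ 2 / (2 * (a ^ 2 + b + t / 2)) := by
  have h2p : 2 * (a ^ 2 + b + t / 2) ≠ 0 := mul_ne_zero two_ne_zero hp
  rw [← sub_eq_zero, ← mul_left_inj' h2p, zero_mul]
  simp only [sub_mul, add_mul, div_mul_cancel₀ _ h2p]
  ring

/-- If `y` solves P2(α) then `p = y² + y' + t/2` solves P34((α+1/2)²) wherever `p ≠ 0`. -/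
theorem P2_to_P34 (α : ℂ) (y : ℂ → ℂ) (hy : ContDiff ℂ 3 y)
    (heq : ∀ t : ℂ, deriv (deriv y) t = 2 * y t ^ 3 + t * y t + α) :
    ∀ t : ℂ, (y t ^ 2 + deriv y t + t / 2) ≠ 0 →
      deriv (deriv (fun s : ℂ => y s ^ 2 + deriv y s + s / 2)) t
        = (deriv (fun s : ℂ => y s ^ 2 + deriv y s + s / 2) t) ^ 2
            / (2 * (y t ^ 2 + deriv y t + t / 2))
          + 2 * (y t ^ 2 + deriv y t + t / 2) ^ 2
          - t * (y t ^ 2 + deriv y t + t / 2)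
          - (α + 1 / 2) ^ 2 / (2 * (y t ^ 2 + deriv y t + t / 2)) := by
  intro t hp
  have hy₁ : Differentiable ℂ y := hy.differentiable (by norm_num)
  have hy₂ : Differentiable ℂ (deriv y) := (hy.of_le (by norm_num)).differentiable_deriv_two
  rw [deriv_deriv_sq_add_deriv_add_half_of_P2 hy₁ hy₂ heq,
    deriv_sq_add_deriv_add_half_of_P2 hy₁ hy₂ heq]
  exact P34_algebraic_identity α t (y t) (deriv y t) hp
end

section
/- If p satisfies the thirty-fourth Painlevé equation P34(α): p'' = (p')²/(2p) + 2p² − tp − α/(2p) with p nowhere vanishing, and s is a square root of α (s² = α), then q := (p' − s)/(2p) satisfies the second Painlevé equation P2(s − 1/2): q'' = 2q³ + tq + (s − 1/2). -/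
/-!
By P34 (with α = s²), `q = (p' − s)/(2p)` solves the Riccati equation `q' = p − t/2 − q²`.
Differentiating it once more and eliminating `p'` through `p' = 2pq + s`, the defining relation
of `q`, leaves exactly P2 with parameter `s − 1/2`.
-/

variable {𝕜 : Type*} [RCLike 𝕜]

theorem hasDerivAt_riccati_of_P34 {p : 𝕜 → 𝕜} {s t : 𝕜} (hp : DifferentiableAt 𝕜 p t)
    (hp' : DifferentiableAt 𝕜 (deriv p) t) (hpt : p t ≠ 0)
    (heq : deriv (deriv p) t
      = deriv p t ^ 2 / (2 * p t) + 2 * p t ^ 2 - t * p t - s ^ 2 / (2 * p t)) :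
    HasDerivAt (fun u => (deriv p u - s) / (2 * p u))
      (p t - t / 2 - ((deriv p t - s) / (2 * p t)) ^ 2) t := by
  have h2p : 2 * p t ≠ 0 := mul_ne_zero two_ne_zero hpt
  refine ((hp'.hasDerivAt.sub_const s).div (hp.hasDerivAt.const_mul 2) h2p).congr_deriv ?_
  rw [heq]
  field_simp
  ring

theorem deriv_deriv_eq_P2_of_riccati {p q : 𝕜 → 𝕜} {s t : 𝕜}
    (hq : ∀ u, HasDerivAt q (p u - u / 2 - q u ^ 2) u) (hp : HasDerivAt p (2 * p t * q t + s) t) :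
    deriv (deriv q) t = 2 * q t ^ 3 + t * q t + (s - 1 / 2) := by
  have hq' : HasDerivAt (fun u => p u - u / 2 - q u ^ 2)
      (2 * p t * q t + s - 1 / 2 - 2 * q t * (p t - t / 2 - q t ^ 2)) t := by
    refine ((hp.sub ((hasDerivAt_id t).div_const 2)).sub ((hq t).pow 2)).congr_deriv ?_
    ring
  rw [funext fun u => (hq u).deriv, hq'.deriv]
  ring

/-- If `p` solves P34(α), `p` is nonvanishing, and `s² = α`, then
`q = (p' − s)/(2p)` solves P2(s − 1/2). -/
theorem P34_to_P2 (α s : ℂ) (hs : s ^ 2 = α) (p : ℂ → ℂ)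
    (hp : ContDiff ℂ 3 p) (hpne : ∀ t : ℂ, p t ≠ 0)
    (heq : ∀ t : ℂ, deriv (deriv p) t
      = (deriv p t) ^ 2 / (2 * p t) + 2 * p t ^ 2 - t * p t - α / (2 * p t)) :
    ∀ t : ℂ,
      deriv (deriv (fun u : ℂ => (deriv p u - s) / (2 * p u))) t
        = 2 * ((deriv p t - s) / (2 * p t)) ^ 3 + t * ((deriv p t - s) / (2 * p t))
          + (s - 1 / 2) := by
  intro t
  have hp₁ : Differentiable ℂ p := hp.differentiable (by norm_num)
  have hp₂ : Differentiable ℂ (deriv p) := (hp.of_le (by norm_num)).differentiable_deriv_two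
  have hriccati (u : ℂ) := hasDerivAt_riccati_of_P34 (s := s) (hp₁ u) (hp₂ u) (hpne u)
    (by rw [heq u, hs])
  refine deriv_deriv_eq_P2_of_riccati hriccati ?_
  refine (hp₁ t).hasDerivAt.congr_deriv ?_
  field_simp [hpne t]
  ring
end

section
/- If (q, p) is a solution of the Hamiltonian system t·q' = 2pq² − q² + (α₁ + β₁)q + t, t·p' = −2p²q + 2pq − (α₁ + β₁)p + α₁ (with Hamiltonian t·H = q²p² − (q² − (α₁+β₁)q − t)p − α₁q), then q satisfies the third Painlevé equation P3'(4(α₁ − β₁), −4(α₁ + β₁ − 1), 4, −4): q'' = (q')²/q − q'/t + (4(α₁−β₁)q² + 4q³)/(4t²) + (−4(α₁+β₁−1))/(4t) + (−4)/(4q), i.e. q'' = (q')²/q − q'/t + ((α₁−β₁)q² + q³)/t² − (α₁+β₁−1)/t − 1/q. -/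
/-!
Solving `t q' = F := 2 p q² − q² + (α₁ + β₁) q + t` for `q'` shows that `q'` is differentiable
away from `t = 0`, and differentiating `t q'` gives `t q'' = F' − q'`.
The right-hand side involves `p'`, which the second equation turns into a polynomial in `p`, `q`;
finally `p` itself is eliminated through the first equation, using `q ≠ 0`.
-/

open Filter Topology

section InverseProductRule

variable {𝕜 : Type*} [NontriviallyNormedField 𝕜] {f g : 𝕜 → 𝕜} {g' t : 𝕜}

theorem eventuallyEq_div_of_mul_eq (h : ∀ s, s * f s = g s) (ht : t ≠ 0) :
    f =ᶠ[𝓝 t] fun s => g s / s := by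
  filter_upwards [isOpen_ne.mem_nhds ht] with s hs
  rw [eq_div_iff hs, mul_comm, h]

theorem hasDerivAt_of_mul_eq (h : ∀ s, s * f s = g s) (hg : HasDerivAt g g' t) (ht : t ≠ 0) :
    HasDerivAt f ((g' - f t) / t) t := by
  have hquot := hg.div (hasDerivAt_id t) ht
  rw [← h t] at hquot
  refine (hquot.congr_of_eventuallyEq (eventuallyEq_div_of_mul_eq h ht)).congr_deriv ?_
  simp only [id]
  field_simp

end InverseProductRule

theorem hasDerivAt_D6_rhs_q {α₁ β₁ t : ℂ} {q p : ℂ → ℂ}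
    (hq : DifferentiableAt ℂ q t) (hp : DifferentiableAt ℂ p t) :
    HasDerivAt (fun s => 2 * p s * q s ^ 2 - q s ^ 2 + (α₁ + β₁) * q s + s)
      (2 * deriv p t * q t ^ 2 + 4 * p t * q t * deriv q t - 2 * q t * deriv q t
        + (α₁ + β₁) * deriv q t + 1) t := by
  have hF : HasDerivAt (fun s => 2 * p s * q s ^ 2 - q s ^ 2 + (α₁ + β₁) * q s + s)
      (2 * deriv p t * q t ^ 2 + 2 * p t * (2 * q t ^ 1 * deriv q t) - 2 * q t ^ 1 * deriv q t
        + (α₁ + β₁) * deriv q t + 1) t :=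
    ((((hp.hasDerivAt.const_mul 2).mul (hq.hasDerivAt.pow 2)).sub (hq.hasDerivAt.pow 2)).add
      (hq.hasDerivAt.const_mul (α₁ + β₁))).add (hasDerivAt_id t)
  exact hF.congr_deriv (by ring)

theorem P3'_of_D6_relations {α₁ β₁ t Q P Q' P' Q'' : ℂ} (ht : t ≠ 0) (hQ : Q ≠ 0)
    (h₁ : t * Q' = 2 * P * Q ^ 2 - Q ^ 2 + (α₁ + β₁) * Q + t)
    (h₂ : t * P' = -2 * P ^ 2 * Q + 2 * P * Q - (α₁ + β₁) * P + α₁)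
    (h₃ : t * Q'' = 2 * P' * Q ^ 2 + 4 * P * Q * Q' - 2 * Q * Q' + (α₁ + β₁) * Q' + 1 - Q') :
    Q'' = Q' ^ 2 / Q - Q' / t + ((α₁ - β₁) * Q ^ 2 + Q ^ 3) / t ^ 2
      - (α₁ + β₁ - 1) / t - 1 / Q := by
  field_simp
  linear_combination (t * Q) * h₃ + (2 * Q ^ 3) * h₂
    + (2 * P * Q ^ 2 - Q ^ 2 - t * Q' - t) * h₁

/-- Eliminating `p` from the Hamiltonian system H'_{D6} yields the third
Painlevé equation P3'(4(α₁−β₁), −4(α₁+β₁−1), 4, −4). -/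
theorem D6_system_gives_P3' (α₁ β₁ : ℂ) (q p : ℂ → ℂ)
    (hq : Differentiable ℂ q) (hp : Differentiable ℂ p)
    (heq1 : ∀ t : ℂ, t * deriv q t
      = 2 * p t * q t ^ 2 - q t ^ 2 + (α₁ + β₁) * q t + t)
    (heq2 : ∀ t : ℂ, t * deriv p t
      = -2 * p t ^ 2 * q t + 2 * p t * q t - (α₁ + β₁) * p t + α₁) :
    ∀ t : ℂ, t ≠ 0 → q t ≠ 0 →
      deriv (deriv q) t
        = (deriv q t) ^ 2 / q t - deriv q t / t
          + ((α₁ - β₁) * q t ^ 2 + q t ^ 3) / t ^ 2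
          - (α₁ + β₁ - 1) / t - 1 / q t := by
  intro t ht hqt
  have hq'' := hasDerivAt_of_mul_eq heq1 (hasDerivAt_D6_rhs_q (hq t) (hp t)) ht
  refine P3'_of_D6_relations ht hqt (heq1 t) (heq2 t) ?_
  rw [hq''.deriv, mul_div_cancel₀ _ ht]
end
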